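/- Projection operations preserve monodromy: let C(P,L) be a framed cycle in general position on k ≥ 4 vertices, ω_i a projection operation, j ∉ {i, i+1}, and ℓ a line containing neither the vertices of C(P,L) nor the new point pᵢ'. Then M_ℓ(ℓⱼ, C(P,L)) = M_ℓ(ℓⱼ, ω_i(C(P,L))). In particular, in an affine chart with ℓ at infinity, the composition of shifts ξ[p_{i+1}p_{i+2}] ∘ ξ[pᵢp_{i+1}] ∘ ξ[p_{i−1}pᵢ] : ℓ_{i−1} → ℓ_{i+2} equals ξ[pᵢ'p_{i+2}] ∘ ξ[p_{i−1}pᵢ'] : ℓ_{i−1} → ℓ_{i+2} computed through ℓᵢ'. -/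

import Mathlib

open scoped Classical
open Fin.NatCast

noncomputable section

abbrev V3 : Type := Fin 3 → ℝ
abbrev Form : Type := V3 → V3 → ℝ

/-- The covector dual to `p` (`dp`). -/
def dualE (p : V3) : V3 → ℝ := fun x => ∑ i, p i * x i

/-- The wedge product `dp ∧ dq`, as a bilinear form on ℝ³. -/
def wedgeE (p q : V3) : Form :=
  fun x y => dualE p x * dualE q y - dualE p y * dualE q x

/-- The projective line through the points represented by `p` and `q`, as a subspace of ℝ³. -/
def projLine (p q : V3) : Submodule ℝ V3 := Submodule.span ℝ {p, q}

/-- `F` is a force whose line of force lies in the (2-dimensional) subspace `W`. -/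
def AlongSub (F : Form) (W : Submodule ℝ V3) : Prop :=
  ∃ a b : V3, a ∈ W ∧ b ∈ W ∧ F = wedgeE a b

/-- A framed cycle in ℝP²: points `P i` together with lines `L i` through them. -/
structure FramedCycle (k : ℕ) where
  P : Fin k → V3
  L : Fin k → Submodule ℝ V3
  hP : ∀ i, P i ≠ 0
  hL : ∀ i, Module.finrank ℝ (L i) = 2
  hPL : ∀ i, P i ∈ L i

/-- The line of the edge `pᵢ p_{i+1}` of a framed cycle. -/
def edgeLn {k : ℕ} [NeZero k] (C : FramedCycle k) (i : Fin k) : Submodule ℝ V3 :=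
  projLine (C.P i) (C.P (i + 1))

/-- A framed cycle is in general position: the edge lines are genuine lines with exactly
`k(k−1)/2` distinct pairwise intersection points, and the framing line at `pᵢ` contains
neither `p_{i−1}` nor `p_{i+1}`. -/
def GenPos {k : ℕ} [NeZero k] (C : FramedCycle k) : Prop :=
  (∀ i, Module.finrank ℝ (edgeLn C i) = 2) ∧
  (∀ i j, i ≠ j → edgeLn C i ≠ edgeLn C j) ∧
  (∀ i j i' j' : Fin k, i ≠ j → i' ≠ j' →
    ({i, j} : Finset (Fin k)) ≠ ({i', j'} : Finset (Fin k)) →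
    edgeLn C i ⊓ edgeLn C j ≠ edgeLn C i' ⊓ edgeLn C j') ∧
  (∀ i, C.P (i - 1) ∉ C.L i ∧ C.P (i + 1) ∉ C.L i)

/-- A force-load on a framed cycle: `Fe i` is the stress `F_{i,i+1}` along the edge
`pᵢp_{i+1}` (with `F_{i+1,i} = −Fe i`), and `Ff i` is the framing force along `ℓᵢ`. -/
structure CycleLoad (k : ℕ) where
  Fe : Fin k → Form
  Ff : Fin k → Form

/-- The force-load has its forces along the prescribed lines of the framed cycle. -/
def CycleLoad.Valid {k : ℕ} [NeZero k] (F : CycleLoad k) (C : FramedCycle k) : Prop :=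
  (∀ i, AlongSub (F.Fe i) (edgeLn C i)) ∧ (∀ i, AlongSub (F.Ff i) (C.L i))

/-- The equilibrium condition `F_{i,i−1} + F_{i,i+1} + Fᵢ = 0` at the vertex `pᵢ`. -/
def EqAt {k : ℕ} [NeZero k] (F : CycleLoad k) (i : Fin k) : Prop :=
  -F.Fe (i - 1) + F.Fe i + F.Ff i = 0

/-- The force-load is nonzero. -/
def CycleLoad.Nonzero {k : ℕ} (F : CycleLoad k) : Prop :=
  (∃ i, F.Fe i ≠ 0) ∨ (∃ i, F.Ff i ≠ 0)

/-- The shift operator `ξ_ℓ` with respect to the auxiliary line `ℓ`: the point `X` of a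
framing line is sent to `m' ∩ ((e ∩ ℓ), X)`, where `e` is the edge line. -/
def shiftPt (e ℓ m' X : Submodule ℝ V3) : Submodule ℝ V3 := m' ⊓ ((e ⊓ ℓ) ⊔ X)

/-- Composition of `n` consecutive shift operators of the framed cycle `C`, starting at the
framing line `ℓᵢ`. -/
def shiftChain {k : ℕ} [NeZero k] (C : FramedCycle k) (ℓ : Submodule ℝ V3) (i : Fin k) :
    ℕ → Submodule ℝ V3 → Submodule ℝ V3
  | 0, X => X
  | n + 1, X => shiftPt (edgeLn C (i + (n : Fin k))) ℓ (C.L (i + (n : Fin k) + 1))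
      (shiftChain C ℓ i n X)

/-- The monodromy operator `M_ℓ(ℓᵢ, C(P,L))` (the composition of the shifts around the whole
cycle) is trivial: it fixes every point of the line `ℓᵢ`. -/
def MonoTrivial {k : ℕ} [NeZero k] (C : FramedCycle k) (ℓ : Submodule ℝ V3) (i : Fin k) :
    Prop :=
  ∀ X : Submodule ℝ V3, X ≤ C.L i → Module.finrank ℝ X = 1 → shiftChain C ℓ i k X = X

section PortHelpers
open Fin.CommRing
open Module Submodule

lemma V3_finrank : finrank ℝ V3 = 3 := by simp [Module.finrank_fin_fun]

lemma finrank_le3 (W : Submodule ℝ V3) : finrank ℝ W ≤ 3 := by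
  simpa [V3_finrank] using W.finrank_le

lemma pair_span (p q : V3) :
    projLine p q = Submodule.span ℝ {p} ⊔ Submodule.span ℝ {q} := by
  rw [projLine, Submodule.span_insert]

lemma mem_projLine_left (p q : V3) : p ∈ projLine p q :=
  Submodule.subset_span (Set.mem_insert _ _)

lemma mem_projLine_right (p q : V3) : q ∈ projLine p q :=
  Submodule.subset_span (by simp)

lemma inf_planes_rank_one {W1 W2 : Submodule ℝ V3} (h1 : finrank ℝ W1 = 2)
    (h2 : finrank ℝ W2 = 2) (hne : W1 ≠ W2) : finrank ℝ (W1 ⊓ W2 : Submodule ℝ V3) = 1 := by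
  have hsum := Submodule.finrank_sup_add_finrank_inf_eq W1 W2
  have hle : finrank ℝ (W1 ⊔ W2 : Submodule ℝ V3) ≤ 3 := finrank_le3 _
  have h3 : 3 ≤ finrank ℝ (W1 ⊔ W2 : Submodule ℝ V3) := by
    by_contra h
    have hW1 : W1 = W1 ⊔ W2 := Submodule.eq_of_le_of_finrank_le le_sup_left (by omega)
    have hW2 : W2 = W1 ⊔ W2 := Submodule.eq_of_le_of_finrank_le le_sup_right (by omega)
    exact hne (hW1.trans hW2.symm)
  omega

lemma span_of_rank_one {W : Submodule ℝ V3} (h : finrank ℝ W = 1) {v : V3}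
    (hv : v ∈ W) (hv0 : v ≠ 0) : W = Submodule.span ℝ {v} := by
  refine (Submodule.eq_of_le_of_finrank_le ?_ ?_).symm
  · simpa [Submodule.span_le] using hv
  · rw [finrank_span_singleton hv0, h]

lemma inf_planes_eq_span {W1 W2 : Submodule ℝ V3} (h1 : finrank ℝ W1 = 2)
    (h2 : finrank ℝ W2 = 2) (hne : W1 ≠ W2) {v : V3} (hv0 : v ≠ 0)
    (hv1 : v ∈ W1) (hv2 : v ∈ W2) : W1 ⊓ W2 = Submodule.span ℝ {v} :=
  span_of_rank_one (inf_planes_rank_one h1 h2 hne) ⟨hv1, hv2⟩ hv0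

/-- first vector not in `W`, second in `W`. -/
lemma indep_pair {p q : V3} {W : Submodule ℝ V3} (hp : p ∉ W) (hq : q ∈ W)
    (hp0 : p ≠ 0) (hq0 : q ≠ 0) : LinearIndependent ℝ ![p, q] := by
  rw [LinearIndependent.pair_iff' hp0]
  intro a ha
  rcases eq_or_ne a 0 with rfl | ha0
  · simp at ha; exact hq0 ha.symm
  · have : a⁻¹ • a • p ∈ W := W.smul_mem a⁻¹ (ha ▸ hq)
    rw [smul_smul, inv_mul_cancel₀ ha0, one_smul] at this
    exact hp this

/-- first vector in `W`, second not in `W`. -/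
lemma indep_pair₂ {p q : V3} {W : Submodule ℝ V3} (hp : p ∈ W) (hq : q ∉ W)
    (hp0 : p ≠ 0) : LinearIndependent ℝ ![p, q] := by
  rw [LinearIndependent.pair_iff' hp0]
  intro a ha
  exact hq (ha ▸ W.smul_mem a hp)

lemma rank_projLine {p q : V3} (h : LinearIndependent ℝ ![p, q]) :
    finrank ℝ (projLine p q) = 2 := by
  have : Set.range ![p, q] = {p, q} := by
    simp [Matrix.range_cons, Matrix.range_empty, Set.singleton_union, Set.pair_comm]
  rw [projLine, ← this, finrank_span_eq_card h, Fintype.card_fin]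

lemma plane_eq_projLine {W : Submodule ℝ V3} (hW : finrank ℝ W = 2) {p q : V3}
    (hp : p ∈ W) (hq : q ∈ W) (hind : LinearIndependent ℝ ![p, q]) :
    W = projLine p q := by
  refine (Submodule.eq_of_le_of_finrank_le ?_ ?_).symm
  · rw [projLine, Submodule.span_le]; rintro x (rfl | rfl); exact hp; simpa using hq
  · rw [hW, rank_projLine hind]

lemma shift_core {m' : Submodule ℝ V3} {d x y : V3} (hm' : finrank ℝ m' = 2)
    (hd : d ∉ m') (hind : LinearIndependent ℝ ![d, x]) (hy : y ∈ m')
    (hyx : y ∈ projLine d x) (hy0 : y ≠ 0) :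
    m' ⊓ (Submodule.span ℝ {d} ⊔ Submodule.span ℝ {x}) = Submodule.span ℝ {y} := by
  rw [← pair_span]
  exact inf_planes_eq_span hm' (rank_projLine hind)
    (fun h => hd (h ▸ mem_projLine_left d x)) hy0 hy hyx

lemma not_mem_of_inf_span {W1 W2 ℓ : Submodule ℝ V3} {p d : V3}
    (hinf : W1 ⊓ W2 = Submodule.span ℝ {p}) (hd1 : d ∈ W1) (hdl : d ∈ ℓ)
    (hp : p ∉ ℓ) (hd0 : d ≠ 0) : d ∉ W2 := by
  intro h
  have hds : d ∈ Submodule.span ℝ {p} := hinf ▸ Submodule.mem_inf.mpr ⟨hd1, h⟩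
  obtain ⟨c, hc⟩ := Submodule.mem_span_singleton.mp hds
  have hc0 : c ≠ 0 := by rintro rfl; simp at hc; exact hd0 hc.symm
  exact hp (by simpa [← hc, smul_smul, inv_mul_cancel₀ hc0] using ℓ.smul_mem c⁻¹ hdl)

lemma exists_dual_functional (ℓ : Submodule ℝ V3) (hℓ : finrank ℝ ℓ = 2) {x : V3}
    (hx : x ∉ ℓ) : ∃ φ : V3 →ₗ[ℝ] ℝ, φ x ≠ 0 ∧ ∀ y, y ∈ ℓ ↔ φ y = 0 := by
  obtain ⟨φ, hφx, hmap⟩ := Submodule.exists_dual_map_eq_bot_of_notMem hx inferInstance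
  refine ⟨φ, hφx, fun y => ⟨fun hy => ?_, fun hy => ?_⟩⟩
  · have : φ y ∈ Submodule.map φ ℓ := ⟨y, hy, rfl⟩
    simpa [hmap] using this
  · -- ker φ = ℓ
    have hle : ℓ ≤ LinearMap.ker φ := by
      intro z hz
      have : φ z ∈ Submodule.map φ ℓ := ⟨z, hz, rfl⟩
      simpa [hmap, LinearMap.mem_ker] using this
    have hrank := φ.finrank_range_add_finrank_ker
    have hr1 : finrank ℝ (LinearMap.range φ) = 1 := by
      have hle1 : finrank ℝ (LinearMap.range φ) ≤ 1 := by
        simpa [Module.finrank_self] using (LinearMap.range φ).finrank_le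
      have : LinearMap.range φ ≠ ⊥ := by
        intro h
        exact hφx (by simpa [h] using (LinearMap.mem_range_self φ x))
      have h0 : finrank ℝ (LinearMap.range φ) ≠ 0 := by
        intro h0
        exact this (Submodule.finrank_eq_zero.mp h0)
      omega
    have hkerr : finrank ℝ (LinearMap.ker φ) = 2 := by
      rw [V3_finrank] at hrank; omega
    have : ℓ = LinearMap.ker φ :=
      Submodule.eq_of_le_of_finrank_le hle (by rw [hkerr, hℓ])
    rw [this]; exact hy

lemma span_smul_eq {c : ℝ} (hc : c ≠ 0) (v : V3) :
    Submodule.span ℝ {c • v} = Submodule.span ℝ {v} :=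
  Submodule.span_singleton_smul_eq (IsUnit.mk0 c hc) v

section FinHelpers

lemma fin_cast_val {n : ℕ} [NeZero n] (m : ℕ) (h : m < n) : ((m : Fin n) : ℕ) = m := by
  simp [Fin.val_natCast, Nat.mod_eq_of_lt h]

lemma fin_cast_ne_zero {n : ℕ} [NeZero n] {m : ℕ} (h0 : m ≠ 0) (h : m < n) :
    (m : Fin n) ≠ 0 := by
  intro hc
  have := congrArg Fin.val hc
  rw [fin_cast_val m h] at this
  simp at this; exact h0 this

lemma fin_cast_pred {n : ℕ} [NeZero n] : (((n - 1 : ℕ)) : Fin n) = -1 := by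
  have h1 : ((n - 1 : ℕ) : Fin n) + 1 = 0 := by
    have : (((n - 1) + 1 : ℕ) : Fin n) = 0 := by
      rw [Nat.sub_add_cancel (Nat.one_le_iff_ne_zero.mpr (NeZero.ne n))]
      exact Fin.natCast_self n
    push_cast at this
    exact this
  linear_combination h1

end FinHelpers

section ChainHelpers

variable {k : ℕ} [NeZero k]

lemma shiftChain_add (C : FramedCycle k) (ℓ : Submodule ℝ V3) (s : Fin k) (a b : ℕ)
    (X : Submodule ℝ V3) :
    shiftChain C ℓ s (a + b) X =
      shiftChain C ℓ (s + (a : Fin k)) b (shiftChain C ℓ s a X) := by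
  induction b with
  | zero => rfl
  | succ b ih =>
    show shiftPt _ _ _ _ = shiftPt _ _ _ _
    simp only [Nat.add_eq]
    rw [ih]
    have hc : ((a + b : ℕ) : Fin k) = (a : Fin k) + (b : Fin k) := by push_cast; ring
    rw [hc, ← add_assoc]

lemma shiftChain_congr {k2 : ℕ} [NeZero k2] (C1 : FramedCycle k) (C2 : FramedCycle k2)
    (ℓ : Submodule ℝ V3) (s1 : Fin k) (s2 : Fin k2) (n : ℕ)
    (hE : ∀ t, t < n → edgeLn C1 (s1 + (t : Fin k)) = edgeLn C2 (s2 + (t : Fin k2)))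
    (hM : ∀ t, t < n → C1.L (s1 + (t : Fin k) + 1) = C2.L (s2 + (t : Fin k2) + 1))
    (X : Submodule ℝ V3) :
    shiftChain C1 ℓ s1 n X = shiftChain C2 ℓ s2 n X := by
  induction n with
  | zero => rfl
  | succ n ih =>
    show shiftPt _ _ _ _ = shiftPt _ _ _ _
    rw [hE n (by omega), hM n (by omega),
      ih (fun t ht => hE t (by omega)) (fun t ht => hM t (by omega))]

lemma shiftChain_three (C : FramedCycle k) (ℓ : Submodule ℝ V3) (s : Fin k)
    (X : Submodule ℝ V3) :
    shiftChain C ℓ s 3 X =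
      shiftPt (edgeLn C (s + 2)) ℓ (C.L (s + 2 + 1))
        (shiftPt (edgeLn C (s + 1)) ℓ (C.L (s + 1 + 1))
          (shiftPt (edgeLn C s) ℓ (C.L (s + 1)) X)) := by
  show shiftPt (edgeLn C (s + ((2 : ℕ) : Fin k))) ℓ (C.L (s + ((2 : ℕ) : Fin k) + 1))
      (shiftPt (edgeLn C (s + ((1 : ℕ) : Fin k))) ℓ (C.L (s + ((1 : ℕ) : Fin k) + 1))
        (shiftPt (edgeLn C (s + ((0 : ℕ) : Fin k))) ℓ (C.L (s + ((0 : ℕ) : Fin k) + 1)) X)) = _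
  norm_num

lemma shiftChain_two (C : FramedCycle k) (ℓ : Submodule ℝ V3) (s : Fin k)
    (X : Submodule ℝ V3) :
    shiftChain C ℓ s 2 X =
      shiftPt (edgeLn C (s + 1)) ℓ (C.L (s + 1 + 1))
        (shiftPt (edgeLn C s) ℓ (C.L (s + 1)) X) := by
  show shiftPt (edgeLn C (s + ((1 : ℕ) : Fin k))) ℓ (C.L (s + ((1 : ℕ) : Fin k) + 1))
        (shiftPt (edgeLn C (s + ((0 : ℕ) : Fin k))) ℓ (C.L (s + ((0 : ℕ) : Fin k) + 1)) X) = _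
  norm_num

end ChainHelpers

section Inv

variable {k : ℕ} [NeZero k]

lemma edge_ne_L_succ (C : FramedCycle k) (hGP : GenPos C) (m : Fin k) :
    edgeLn C m ≠ C.L (m + 1) := by
  intro h
  have h4 := (hGP.2.2.2 (m + 1)).1
  rw [show m + 1 - 1 = m by ring] at h4
  exact h4 (h ▸ mem_projLine_left _ _)

lemma edge_inf_L_succ (C : FramedCycle k) (hGP : GenPos C) (m : Fin k) :
    edgeLn C m ⊓ C.L (m + 1) = Submodule.span ℝ {C.P (m + 1)} :=
  inf_planes_eq_span (hGP.1 m) (C.hL (m + 1)) (edge_ne_L_succ C hGP m) (C.hP _)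
    (mem_projLine_right _ _) (C.hPL _)

lemma edge_ne_L_self (C : FramedCycle k) (hGP : GenPos C) (m : Fin k) :
    edgeLn C m ≠ C.L m := by
  intro h
  exact (hGP.2.2.2 m).2 (h ▸ mem_projLine_right _ _)

lemma edge_inf_L_self (C : FramedCycle k) (hGP : GenPos C) (m : Fin k) :
    edgeLn C m ⊓ C.L m = Submodule.span ℝ {C.P m} :=
  inf_planes_eq_span (hGP.1 m) (C.hL m) (edge_ne_L_self C hGP m) (C.hP _)
    (mem_projLine_left _ _) (C.hPL _)

lemma rank_one_gen {X : Submodule ℝ V3} (hX1 : finrank ℝ X = 1) :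
    ∃ x : V3, x ∈ X ∧ x ≠ 0 ∧ X = Submodule.span ℝ {x} := by
  have hne : X ≠ ⊥ := by
    intro h; rw [h] at hX1; simp at hX1
  obtain ⟨x, hx, hx0⟩ := Submodule.exists_mem_ne_zero_of_ne_bot hne
  exact ⟨x, hx, hx0, span_of_rank_one hX1 hx hx0⟩

lemma shift_step_inv (C : FramedCycle k) (hGP : GenPos C) (ℓ : Submodule ℝ V3)
    (hℓ : finrank ℝ ℓ = 2) (hℓv : ∀ m, C.P m ∉ ℓ) (m : Fin k) {X : Submodule ℝ V3}
    (hX : X ≤ C.L m) (hX1 : finrank ℝ X = 1) :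
    shiftPt (edgeLn C m) ℓ (C.L (m + 1)) X ≤ C.L (m + 1) ∧
      finrank ℝ (shiftPt (edgeLn C m) ℓ (C.L (m + 1)) X) = 1 := by
  obtain ⟨x, hxX, hx0, hXspan⟩ := rank_one_gen hX1
  have heℓ : edgeLn C m ≠ ℓ := fun h => hℓv m (h ▸ mem_projLine_left _ _)
  have hinfr : finrank ℝ (edgeLn C m ⊓ ℓ : Submodule ℝ V3) = 1 :=
    inf_planes_rank_one (hGP.1 m) hℓ heℓ
  obtain ⟨d, hd, hd0, hdspan⟩ := rank_one_gen hinfr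
  have hdE : d ∈ edgeLn C m := hd.1
  have hdℓ : d ∈ ℓ := hd.2
  have hdnot : d ∉ C.L (m + 1) :=
    not_mem_of_inf_span (edge_inf_L_succ C hGP m) hdE hdℓ (hℓv (m + 1)) hd0
  have hind : LinearIndependent ℝ ![d, x] := by
    by_cases hxl : x ∈ ℓ
    · have hdm : d ∉ C.L m :=
        not_mem_of_inf_span (edge_inf_L_self C hGP m) hdE hdℓ (hℓv m) hd0
      exact indep_pair hdm (hX hxX) hd0 hx0
    · exact indep_pair₂ hdℓ hxl hd0
  have hkey : shiftPt (edgeLn C m) ℓ (C.L (m + 1)) X = C.L (m + 1) ⊓ projLine d x := by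
    rw [shiftPt, hdspan, hXspan, ← pair_span]
  rw [hkey]
  refine ⟨inf_le_left, ?_⟩
  exact inf_planes_rank_one (C.hL _) (rank_projLine hind)
    (fun h => hdnot (h ▸ mem_projLine_left d x))

lemma shiftChain_inv (C : FramedCycle k) (hGP : GenPos C) (ℓ : Submodule ℝ V3)
    (hℓ : finrank ℝ ℓ = 2) (hℓv : ∀ m, C.P m ∉ ℓ) (s : Fin k) (n : ℕ) {X : Submodule ℝ V3}
    (hX : X ≤ C.L s) (hX1 : finrank ℝ X = 1) :
    shiftChain C ℓ s n X ≤ C.L (s + (n : Fin k)) ∧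
      finrank ℝ (shiftChain C ℓ s n X) = 1 := by
  induction n with
  | zero => simpa using ⟨hX, hX1⟩
  | succ n ih =>
    have h := shift_step_inv C hGP ℓ hℓ hℓv (s + (n : Fin k)) ih.1 ih.2
    have hc : ((n + 1 : ℕ) : Fin k) = ((n : ℕ) : Fin k) + 1 := by push_cast; ring
    have hgoal : shiftChain C ℓ s (n + 1) X =
        shiftPt (edgeLn C (s + (n : Fin k))) ℓ (C.L (s + (n : Fin k) + 1))
          (shiftChain C ℓ s n X) := rfl
    rw [hgoal, hc, ← add_assoc]
    exact h

end Inv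

lemma span_mem_upgrade {v w : V3} {W : Submodule ℝ V3}
    (h : v ∈ Submodule.span ℝ {w}) (hv0 : v ≠ 0) (hvW : v ∈ W) : w ∈ W := by
  obtain ⟨c, hc⟩ := Submodule.mem_span_singleton.mp h
  have hc0 : c ≠ 0 := by rintro rfl; simp at hc; exact hv0 hc.symm
  have := W.smul_mem c⁻¹ hvW
  rw [← hc, smul_smul, inv_mul_cancel₀ hc0, one_smul] at this
  exact this

lemma projLine_smul {c e : ℝ} (hc : c ≠ 0) (he : e ≠ 0) (p q : V3) :
    projLine (c • p) (e • q) = projLine p q := by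
  rw [pair_span, pair_span, span_smul_eq hc, span_smul_eq he]

lemma normalized_sub_ne_zero (φ : V3 →ₗ[ℝ] ℝ) {p q : V3} {W : Submodule ℝ V3}
    (hp : p ∈ W) (hq : q ∉ W) (hφq : φ q ≠ 0) :
    (φ q)⁻¹ • q - (φ p)⁻¹ • p ≠ 0 := by
  intro h
  have hqq : (φ q)⁻¹ • q = (φ p)⁻¹ • p := sub_eq_zero.mp h
  have : q = (φ q * (φ p)⁻¹) • p := by
    have := congrArg (fun v => (φ q) • v) hqq
    simpa [smul_smul, mul_inv_cancel₀ hφq] using this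
  exact hq (this ▸ W.smul_mem _ hp)

lemma eq_ell_of_le {ℓ : Submodule ℝ V3} (hℓ : Module.finrank ℝ ℓ = 2) {d x : V3}
    (hd : d ∈ ℓ) (hx : x ∈ ℓ) (hind : LinearIndependent ℝ ![d, x]) :
    projLine d x = ℓ := by
  refine Submodule.eq_of_le_of_finrank_le ?_ ?_
  · rw [projLine, Submodule.span_le]; rintro v (rfl | rfl); exact hd; simpa using hx
  · rw [hℓ, rank_projLine hind]

lemma key_lemma (k : ℕ) (hk : 3 ≤ k) [NeZero k] (C : FramedCycle (k + 1)) (hGP : GenPos C)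
    (i : Fin (k + 1)) (p' B' : V3) (hp'0 : p' ≠ 0) (hB'0 : B' ≠ 0)
    (hp' : Submodule.span ℝ {p'} =
      projLine (C.P (i - 1)) (C.P i) ⊓ projLine (C.P (i + 1)) (C.P (i + 2)))
    (hB' : Submodule.span ℝ {B'} = C.L i ⊓ C.L (i + 1))
    (hLPr : Module.finrank ℝ (projLine p' B') = 2)
    (ℓ : Submodule ℝ V3) (hℓ : Module.finrank ℝ ℓ = 2)
    (hℓv : ∀ m, C.P m ∉ ℓ) (hℓp' : p' ∉ ℓ)
    (X : Submodule ℝ V3) (hX : X ≤ C.L (i - 1)) (hX1 : Module.finrank ℝ X = 1) :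
    shiftPt (edgeLn C (i + 1)) ℓ (C.L (i + 2))
        (shiftPt (edgeLn C i) ℓ (C.L (i + 1)) (shiftPt (edgeLn C (i - 1)) ℓ (C.L i) X)) =
      shiftPt (projLine p' (C.P (i + 2))) ℓ (C.L (i + 2))
        (shiftPt (projLine (C.P (i - 1)) p') ℓ (projLine p' B') X) := by
  have hk1 : 4 ≤ k + 1 := by omega
  set p0 := C.P (i - 1) with hp0def
  set p1 := C.P i with hp1def
  set p2 := C.P (i + 1) with hp2def
  set p3 := C.P (i + 2) with hp3def
  set m0 := C.L (i - 1) with hm0def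
  set m1 := C.L i with hm1def
  set m2 := C.L (i + 1) with hm2def
  set m3 := C.L (i + 2) with hm3def
  set E1 := projLine p0 p1 with hE1def
  set E2 := projLine p1 p2 with hE2def
  set E3 := projLine p2 p3 with hE3def
  set LP := projLine p' B' with hLPdef
  -- Fin index facts
  have hne21 : i - 1 ≠ i + 1 := by
    intro h
    exact fin_cast_ne_zero (n := k + 1) (m := 2) (by omega) (by omega)
      (by push_cast; linear_combination -h)
  have hne_m2m1 : i - 2 ≠ i - 1 := by
    intro h
    exact fin_cast_ne_zero (n := k + 1) (m := 1) (by omega) (by omega)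
      (by push_cast; linear_combination -h)
  have hne_m2p1 : i - 2 ≠ i + 1 := by
    intro h
    exact fin_cast_ne_zero (n := k + 1) (m := 3) (by omega) (by omega)
      (by push_cast; linear_combination -h)
  have hne_p1p2 : i + 1 ≠ i + 2 := by
    intro h
    exact fin_cast_ne_zero (n := k + 1) (m := 1) (by omega) (by omega)
      (by push_cast; linear_combination -h)
  -- edge lines
  have hE1 : edgeLn C (i - 1) = E1 := by
    rw [edgeLn, show i - 1 + 1 = i by ring, hE1def, hp0def, hp1def]
  have hE2 : edgeLn C i = E2 := rfl
  have hE3 : edgeLn C (i + 1) = E3 := by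
    rw [edgeLn, show i + 1 + 1 = i + 2 by ring, hE3def, hp2def, hp3def]
  have hE1r : Module.finrank ℝ E1 = 2 := by rw [← hE1]; exact hGP.1 (i - 1)
  have hE2r : Module.finrank ℝ E2 = 2 := by rw [← hE2]; exact hGP.1 i
  have hE3r : Module.finrank ℝ E3 = 2 := by rw [← hE3]; exact hGP.1 (i + 1)
  have hm0r : Module.finrank ℝ m0 = 2 := C.hL _
  have hm1r : Module.finrank ℝ m1 = 2 := C.hL _
  have hm2r : Module.finrank ℝ m2 = 2 := C.hL _
  have hm3r : Module.finrank ℝ m3 = 2 := C.hL _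
  -- nonzero
  have hp00 : p0 ≠ 0 := C.hP _
  have hp10 : p1 ≠ 0 := C.hP _
  have hp20 : p2 ≠ 0 := C.hP _
  have hp30 : p3 ≠ 0 := C.hP _
  -- not on ℓ
  have hp0ℓ : p0 ∉ ℓ := hℓv _
  have hp1ℓ : p1 ∉ ℓ := hℓv _
  have hp2ℓ : p2 ∉ ℓ := hℓv _
  have hp3ℓ : p3 ∉ ℓ := hℓv _
  -- general position (condition 4)
  have h4a : p0 ∉ m1 := (hGP.2.2.2 i).1
  have h4b : p2 ∉ m1 := (hGP.2.2.2 i).2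
  have h4c : p1 ∉ m2 := by
    have := (hGP.2.2.2 (i + 1)).1; rwa [show i + 1 - 1 = i by ring] at this
  have h4d : p3 ∉ m2 := by
    have := (hGP.2.2.2 (i + 1)).2; rwa [show i + 1 + 1 = i + 2 by ring] at this
  have h4e : p2 ∉ m3 := by
    have := (hGP.2.2.2 (i + 2)).1; rwa [show i + 2 - 1 = i + 1 by ring] at this
  have h4f : p1 ∉ m0 := by
    have := (hGP.2.2.2 (i - 1)).2; rwa [show i - 1 + 1 = i by ring] at this
  -- memberships
  have hp0E1 : p0 ∈ E1 := mem_projLine_left _ _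
  have hp1E1 : p1 ∈ E1 := mem_projLine_right _ _
  have hp1E2 : p1 ∈ E2 := mem_projLine_left _ _
  have hp2E2 : p2 ∈ E2 := mem_projLine_right _ _
  have hp2E3 : p2 ∈ E3 := mem_projLine_left _ _
  have hp3E3 : p3 ∈ E3 := mem_projLine_right _ _
  have hp0m0 : p0 ∈ m0 := C.hPL _
  have hp1m1 : p1 ∈ m1 := C.hPL _
  have hp2m2 : p2 ∈ m2 := C.hPL _
  have hp3m3 : p3 ∈ m3 := C.hPL _
  have hB'm1 : B' ∈ m1 := by
    have : B' ∈ Submodule.span ℝ {B'} := Submodule.mem_span_singleton_self B'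
    rw [hB'] at this; exact this.1
  have hB'm2 : B' ∈ m2 := by
    have : B' ∈ Submodule.span ℝ {B'} := Submodule.mem_span_singleton_self B'
    rw [hB'] at this; exact this.2
  have hp'E1 : p' ∈ E1 := by
    have : p' ∈ Submodule.span ℝ {p'} := Submodule.mem_span_singleton_self p'
    rw [hp'] at this; exact this.1
  have hp'E3 : p' ∈ E3 := by
    have : p' ∈ Submodule.span ℝ {p'} := Submodule.mem_span_singleton_self p'
    rw [hp'] at this; exact this.2
  have hp'LP : p' ∈ LP := mem_projLine_left _ _
  have hB'LP : B' ∈ LP := mem_projLine_right _ _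
  -- intersections of edges with framing lines
  have hE1m1 : E1 ⊓ m1 = Submodule.span ℝ {p1} :=
    inf_planes_eq_span hE1r hm1r (fun h => h4a (h ▸ hp0E1)) hp10 hp1E1 hp1m1
  have hE2m1 : E2 ⊓ m1 = Submodule.span ℝ {p1} :=
    inf_planes_eq_span hE2r hm1r (fun h => h4b (h ▸ hp2E2)) hp10 hp1E2 hp1m1
  have hE2m2 : E2 ⊓ m2 = Submodule.span ℝ {p2} :=
    inf_planes_eq_span hE2r hm2r (fun h => h4c (h ▸ hp1E2)) hp20 hp2E2 hp2m2
  have hE3m2 : E3 ⊓ m2 = Submodule.span ℝ {p2} :=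
    inf_planes_eq_span hE3r hm2r (fun h => h4d (h ▸ hp3E3)) hp20 hp2E3 hp2m2
  have hE3m3 : E3 ⊓ m3 = Submodule.span ℝ {p3} :=
    inf_planes_eq_span hE3r hm3r (fun h => h4e (h ▸ hp2E3)) hp30 hp3E3 hp3m3
  have hE1m0 : E1 ⊓ m0 = Submodule.span ℝ {p0} :=
    inf_planes_eq_span hE1r hm0r (fun h => h4f (h ▸ hp1E1)) hp00 hp0E1 hp0m0
  -- planes vs ℓ
  have hE1ℓ : E1 ≠ ℓ := fun h => hp0ℓ (h ▸ hp0E1)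
  have hE2ℓ : E2 ≠ ℓ := fun h => hp1ℓ (h ▸ hp1E2)
  have hE3ℓ : E3 ≠ ℓ := fun h => hp2ℓ (h ▸ hp2E3)
  have hm1ℓ : m1 ≠ ℓ := fun h => hp1ℓ (h ▸ hp1m1)
  have hm2ℓ : m2 ≠ ℓ := fun h => hp2ℓ (h ▸ hp2m2)
  have hm3ℓ : m3 ≠ ℓ := fun h => hp3ℓ (h ▸ hp3m3)
  have hLPℓ : LP ≠ ℓ := fun h => hℓp' (h ▸ hp'LP)
  -- E1 vs E3, and the positions of p0, p3
  have hE1E3 : E1 ≠ E3 := by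
    have := hGP.2.1 (i - 1) (i + 1) hne21
    rwa [hE1, hE3] at this
  have hp0E3 : p0 ∉ E3 := by
    intro h
    have h1 : E1 ⊓ E3 = Submodule.span ℝ {p0} :=
      inf_planes_eq_span hE1r hE3r hE1E3 hp00 hp0E1 h
    have hmem2 : p0 ∈ edgeLn C (i - 2) := by
      rw [edgeLn, show i - 2 + 1 = i - 1 by ring]; exact mem_projLine_right _ _
    have hne12 : edgeLn C (i - 2) ≠ edgeLn C (i - 1) := hGP.2.1 _ _ hne_m2m1
    have h2 : edgeLn C (i - 2) ⊓ edgeLn C (i - 1) = Submodule.span ℝ {p0} :=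
      inf_planes_eq_span (hGP.1 _) (hGP.1 _) hne12 hp00 hmem2 (by rw [hE1]; exact hp0E1)
    refine hGP.2.2.1 (i - 2) (i - 1) (i - 1) (i + 1) hne_m2m1 hne21 ?_ ?_
    · intro hf
      have : (i - 2) ∈ ({i - 1, i + 1} : Finset (Fin (k + 1))) := by
        rw [← hf]; exact Finset.mem_insert_self _ _
      simp only [Finset.mem_insert, Finset.mem_singleton] at this
      rcases this with h' | h'
      · exact hne_m2m1 h'
      · exact hne_m2p1 h'
    · rw [h2, hE1, hE3]; exact h1.symm
  have hp3E1 : p3 ∉ E1 := by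
    intro h
    have h1 : E1 ⊓ E3 = Submodule.span ℝ {p3} :=
      inf_planes_eq_span hE1r hE3r hE1E3 hp30 h hp3E3
    have hmem2 : p3 ∈ edgeLn C (i + 2) := mem_projLine_left _ _
    have hne12 : edgeLn C (i + 1) ≠ edgeLn C (i + 2) := hGP.2.1 _ _ hne_p1p2
    have h2 : edgeLn C (i + 1) ⊓ edgeLn C (i + 2) = Submodule.span ℝ {p3} :=
      inf_planes_eq_span (hGP.1 _) (hGP.1 _) hne12 hp30 (by rw [hE3]; exact hp3E3) hmem2
    refine hGP.2.2.1 (i - 1) (i + 1) (i + 1) (i + 2) hne21 hne_p1p2 ?_ ?_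
    · intro hf
      have : (i - 1) ∈ ({i + 1, i + 2} : Finset (Fin (k + 1))) := by
        rw [← hf]; exact Finset.mem_insert_self _ _
      simp only [Finset.mem_insert, Finset.mem_singleton] at this
      rcases this with h' | h'
      · exact hne21 h'
      · refine fin_cast_ne_zero (n := k + 1) (m := 3) (by omega) (by omega) ?_
        push_cast; linear_combination -h'
    · rw [hE3] at h2
      rw [hE1, hE3, h1]; exact h2.symm
  -- LP facts
  have hE1LP : E1 ≠ LP := by
    intro h
    have hB'E1 : B' ∈ E1 := h ▸ hB'LP
    have : B' ∈ Submodule.span ℝ {p1} := hE1m1 ▸ Submodule.mem_inf.mpr ⟨hB'E1, hB'm1⟩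
    exact h4c (span_mem_upgrade this hB'0 hB'm2)
  have hE3LP : E3 ≠ LP := by
    intro h
    have hB'E3 : B' ∈ E3 := h ▸ hB'LP
    have : B' ∈ Submodule.span ℝ {p2} := hE3m2 ▸ Submodule.mem_inf.mpr ⟨hB'E3, hB'm2⟩
    exact h4b (span_mem_upgrade this hB'0 hB'm1)
  have hE1LPinf : E1 ⊓ LP = Submodule.span ℝ {p'} :=
    inf_planes_eq_span hE1r hLPr hE1LP hp'0 hp'E1 hp'LP
  have hE3LPinf : E3 ⊓ LP = Submodule.span ℝ {p'} :=
    inf_planes_eq_span hE3r hLPr hE3LP hp'0 hp'E3 hp'LP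
  -- the projective lines through p' coincide with edges
  have hprojp0p' : projLine p0 p' = E1 :=
    (plane_eq_projLine hE1r hp0E1 hp'E1 (indep_pair hp0E3 hp'E3 hp00 hp'0)).symm
  have hprojp'p3 : projLine p' p3 = E3 :=
    (plane_eq_projLine hE3r hp'E3 hp3E3 (indep_pair₂ hp'E1 hp3E1 hp'0)).symm
  -- framing lines through B'
  have hm1span : m1 = projLine p1 B' :=
    plane_eq_projLine hm1r hp1m1 hB'm1 (indep_pair h4c hB'm2 hp10 hB'0)
  have hm2span : m2 = projLine p2 B' :=
    plane_eq_projLine hm2r hp2m2 hB'm2 (indep_pair h4b hB'm1 hp20 hB'0)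
  -- generator of X
  obtain ⟨x, hxX, hx0, hXspan⟩ := rank_one_gen hX1
  have hxm0 : x ∈ m0 := hX hxX
  by_cases hxℓ : x ∈ ℓ
  · -- Case B : `X` is the point at infinity of `m0`
    have hE1ℓr : Module.finrank ℝ (E1 ⊓ ℓ : Submodule ℝ V3) = 1 :=
      inf_planes_rank_one hE1r hℓ hE1ℓ
    obtain ⟨d1, hd1m, hd10, hd1span⟩ := rank_one_gen hE1ℓr
    have hE2ℓr : Module.finrank ℝ (E2 ⊓ ℓ : Submodule ℝ V3) = 1 :=
      inf_planes_rank_one hE2r hℓ hE2ℓ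
    obtain ⟨d3, hd3m, hd30, hd3span⟩ := rank_one_gen hE2ℓr
    have hE3ℓr : Module.finrank ℝ (E3 ⊓ ℓ : Submodule ℝ V3) = 1 :=
      inf_planes_rank_one hE3r hℓ hE3ℓ
    obtain ⟨d2, hd2m, hd20, hd2span⟩ := rank_one_gen hE3ℓr
    have hd1m0 : d1 ∉ m0 := not_mem_of_inf_span hE1m0 hd1m.1 hd1m.2 hp0ℓ hd10
    have hind1 : LinearIndependent ℝ ![d1, x] := indep_pair hd1m0 hxm0 hd10 hx0
    have hsp1 : projLine d1 x = ℓ := eq_ell_of_le hℓ hd1m.2 hxℓ hind1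
    have hL1 : shiftPt (edgeLn C (i - 1)) ℓ m1 X = m1 ⊓ ℓ := by
      rw [shiftPt, hE1, hd1span, hXspan, ← pair_span, hsp1]
    have hm1ℓr : Module.finrank ℝ (m1 ⊓ ℓ : Submodule ℝ V3) = 1 :=
      inf_planes_rank_one hm1r hℓ hm1ℓ
    obtain ⟨y1, hy1m, hy10, hy1span⟩ := rank_one_gen hm1ℓr
    have hd3m1 : d3 ∉ m1 := not_mem_of_inf_span hE2m1 hd3m.1 hd3m.2 hp1ℓ hd30
    have hind2 : LinearIndependent ℝ ![d3, y1] := indep_pair hd3m1 hy1m.1 hd30 hy10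
    have hsp2 : projLine d3 y1 = ℓ := eq_ell_of_le hℓ hd3m.2 hy1m.2 hind2
    have hL2 : shiftPt (edgeLn C i) ℓ m2 (m1 ⊓ ℓ) = m2 ⊓ ℓ := by
      rw [shiftPt, hE2, hd3span, hy1span, ← pair_span, hsp2]
    have hm2ℓr : Module.finrank ℝ (m2 ⊓ ℓ : Submodule ℝ V3) = 1 :=
      inf_planes_rank_one hm2r hℓ hm2ℓ
    obtain ⟨y2, hy2m, hy20, hy2span⟩ := rank_one_gen hm2ℓr
    have hd2m2 : d2 ∉ m2 := not_mem_of_inf_span hE3m2 hd2m.1 hd2m.2 hp2ℓ hd20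
    have hind3 : LinearIndependent ℝ ![d2, y2] := indep_pair hd2m2 hy2m.1 hd20 hy20
    have hsp3 : projLine d2 y2 = ℓ := eq_ell_of_le hℓ hd2m.2 hy2m.2 hind3
    have hL3 : shiftPt (edgeLn C (i + 1)) ℓ m3 (m2 ⊓ ℓ) = m3 ⊓ ℓ := by
      rw [shiftPt, hE3, hd2span, hy2span, ← pair_span, hsp3]
    have hR1 : shiftPt (projLine p0 p') ℓ LP X = LP ⊓ ℓ := by
      rw [shiftPt, hprojp0p', hd1span, hXspan, ← pair_span, hsp1]
    have hLPℓr : Module.finrank ℝ (LP ⊓ ℓ : Submodule ℝ V3) = 1 :=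
      inf_planes_rank_one hLPr hℓ hLPℓ
    obtain ⟨w, hwm, hw0, hwspan⟩ := rank_one_gen hLPℓr
    have hd2LP : d2 ∉ LP := not_mem_of_inf_span hE3LPinf hd2m.1 hd2m.2 hℓp' hd20
    have hindw : LinearIndependent ℝ ![d2, w] := indep_pair hd2LP hwm.1 hd20 hw0
    have hspw : projLine d2 w = ℓ := eq_ell_of_le hℓ hd2m.2 hwm.2 hindw
    have hR2 : shiftPt (projLine p' p3) ℓ m3 (LP ⊓ ℓ) = m3 ⊓ ℓ := by
      rw [shiftPt, hprojp'p3, hd2span, hwspan, ← pair_span, hspw]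
    rw [hL1, hL2, hL3, hR1, hR2]
  · -- Case A : affine point
    obtain ⟨φ, hφx0, hφ⟩ := exists_dual_functional ℓ hℓ hxℓ
    have hφp0 : φ p0 ≠ 0 := fun h => hp0ℓ ((hφ _).mpr h)
    have hφp1 : φ p1 ≠ 0 := fun h => hp1ℓ ((hφ _).mpr h)
    have hφp2 : φ p2 ≠ 0 := fun h => hp2ℓ ((hφ _).mpr h)
    have hφp3 : φ p3 ≠ 0 := fun h => hp3ℓ ((hφ _).mpr h)
    have hφp' : φ p' ≠ 0 := fun h => hℓp' ((hφ _).mpr h)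
    set xh := (φ x)⁻¹ • x with hxhdef
    set q0 := (φ p0)⁻¹ • p0 with hq0def
    set q1 := (φ p1)⁻¹ • p1 with hq1def
    set q2 := (φ p2)⁻¹ • p2 with hq2def
    set q3 := (φ p3)⁻¹ • p3 with hq3def
    set q' := (φ p')⁻¹ • p' with hq'def
    have hφxh : φ xh = 1 := by rw [hxhdef]; simp [inv_mul_cancel₀ hφx0]
    have hφq0 : φ q0 = 1 := by rw [hq0def]; simp [inv_mul_cancel₀ hφp0]
    have hφq1 : φ q1 = 1 := by rw [hq1def]; simp [inv_mul_cancel₀ hφp1]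
    have hφq2 : φ q2 = 1 := by rw [hq2def]; simp [inv_mul_cancel₀ hφp2]
    have hφq3 : φ q3 = 1 := by rw [hq3def]; simp [inv_mul_cancel₀ hφp3]
    have hφq' : φ q' = 1 := by rw [hq'def]; simp [inv_mul_cancel₀ hφp']
    have hXspan' : X = Submodule.span ℝ {xh} := by
      rw [hXspan, hxhdef]; exact (span_smul_eq (inv_ne_zero hφx0) x).symm
    have hxh0 : xh ≠ 0 := by
      rw [hxhdef]; exact smul_ne_zero (inv_ne_zero hφx0) hx0
    have hxhm0 : xh ∈ m0 := m0.smul_mem _ hxm0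
    have hxhℓ : xh ∉ ℓ := fun h => by rw [(hφ _).mp h] at hφxh; norm_num at hφxh
    -- directions
    set d1 := q1 - q0 with hd1def
    set d3 := q2 - q1 with hd3def
    set d2 := q3 - q2 with hd2def
    have hd10 : d1 ≠ 0 := by
      rw [hd1def, hq1def, hq0def]; exact normalized_sub_ne_zero φ hp0m0 h4f hφp1
    have hd30 : d3 ≠ 0 := by
      rw [hd3def, hq2def, hq1def]; exact normalized_sub_ne_zero φ hp1m1 h4b hφp2
    have hd20 : d2 ≠ 0 := by
      rw [hd2def, hq3def, hq2def]; exact normalized_sub_ne_zero φ hp2m2 h4d hφp3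
    have hd1E1 : d1 ∈ E1 := sub_mem (E1.smul_mem _ hp1E1) (E1.smul_mem _ hp0E1)
    have hd3E2 : d3 ∈ E2 := sub_mem (E2.smul_mem _ hp2E2) (E2.smul_mem _ hp1E2)
    have hd2E3 : d2 ∈ E3 := sub_mem (E3.smul_mem _ hp3E3) (E3.smul_mem _ hp2E3)
    have hd1ℓ : d1 ∈ ℓ := (hφ _).mpr (by rw [hd1def, map_sub, hφq1, hφq0, sub_self])
    have hd3ℓ : d3 ∈ ℓ := (hφ _).mpr (by rw [hd3def, map_sub, hφq2, hφq1, sub_self])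
    have hd2ℓ : d2 ∈ ℓ := (hφ _).mpr (by rw [hd2def, map_sub, hφq3, hφq2, sub_self])
    have hE1ℓinf : E1 ⊓ ℓ = Submodule.span ℝ {d1} :=
      inf_planes_eq_span hE1r hℓ hE1ℓ hd10 hd1E1 hd1ℓ
    have hE2ℓinf : E2 ⊓ ℓ = Submodule.span ℝ {d3} :=
      inf_planes_eq_span hE2r hℓ hE2ℓ hd30 hd3E2 hd3ℓ
    have hE3ℓinf : E3 ⊓ ℓ = Submodule.span ℝ {d2} :=
      inf_planes_eq_span hE3r hℓ hE3ℓ hd20 hd2E3 hd2ℓ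
    have hd1m1 : d1 ∉ m1 := not_mem_of_inf_span hE1m1 hd1E1 hd1ℓ hp1ℓ hd10
    have hd3m2 : d3 ∉ m2 := not_mem_of_inf_span hE2m2 hd3E2 hd3ℓ hp2ℓ hd30
    have hd2m3 : d2 ∉ m3 := not_mem_of_inf_span hE3m3 hd2E3 hd2ℓ hp3ℓ hd20
    have hd1LP : d1 ∉ LP := not_mem_of_inf_span hE1LPinf hd1E1 hd1ℓ hℓp' hd10
    have hd2LP : d2 ∉ LP := not_mem_of_inf_span hE3LPinf hd2E3 hd2ℓ hℓp' hd20
    -- coefficients of q' on E1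
    have hq'E1 : q' ∈ projLine q0 q1 := by
      have hPL : projLine q0 q1 = E1 := by
        rw [hq0def, hq1def, hE1def]
        exact projLine_smul (inv_ne_zero hφp0) (inv_ne_zero hφp1) p0 p1
      rw [hPL]; exact E1.smul_mem _ hp'E1
    rw [projLine] at hq'E1
    obtain ⟨a', b', haq⟩ := Submodule.mem_span_pair.mp hq'E1
    have hab : a' + b' = 1 := by
      have h := congrArg φ haq
      simpa [map_add, map_smul, hφq0, hφq1, hφq', smul_eq_mul] using h
    have hb' : b' = 1 - a' := by linarith
    rw [hb'] at haq
    have hq'q1 : q' = q1 + (-a') • d1 := by rw [← haq, hd1def]; module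
    -- coefficients of q' on E3
    have hq'E3 : q' ∈ projLine q2 q3 := by
      have hPL : projLine q2 q3 = E3 := by
        rw [hq2def, hq3def, hE3def]
        exact projLine_smul (inv_ne_zero hφp2) (inv_ne_zero hφp3) p2 p3
      rw [hPL]; exact E3.smul_mem _ hp'E3
    rw [projLine] at hq'E3
    obtain ⟨u', v', huq⟩ := Submodule.mem_span_pair.mp hq'E3
    have huv : u' + v' = 1 := by
      have h := congrArg φ huq
      simpa [map_add, map_smul, hφq2, hφq3, hφq', smul_eq_mul] using h
    have hu' : u' = 1 - v' := by linarith
    rw [hu'] at huq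
    have hq'q2 : q' = q2 + v' • d2 := by rw [← huq, hd2def]; module
    -- step 1 (left)
    have hind1 : LinearIndependent ℝ ![d1, xh] := indep_pair₂ hd1ℓ hxhℓ hd10
    have hS1ne : m1 ≠ projLine d1 xh := fun h => hd1m1 (h ▸ mem_projLine_left _ _)
    have hS1r : Module.finrank ℝ (m1 ⊓ projLine d1 xh : Submodule ℝ V3) = 1 :=
      inf_planes_rank_one hm1r (rank_projLine hind1) hS1ne
    obtain ⟨y, hym, hy0, _⟩ := rank_one_gen hS1r
    have hym2 := hym.2
    rw [projLine] at hym2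
    obtain ⟨a, b, hy⟩ := Submodule.mem_span_pair.mp hym2
    have hb0 : b ≠ 0 := by
      intro h
      rw [h, zero_smul, add_zero] at hy
      have ha0 : a ≠ 0 := by rintro rfl; rw [zero_smul] at hy; exact hy0 hy.symm
      have : d1 ∈ m1 := by
        have := m1.smul_mem a⁻¹ hym.1
        rw [← hy, smul_smul, inv_mul_cancel₀ ha0, one_smul] at this
        exact this
      exact hd1m1 this
    set t1 := b⁻¹ * a with ht1def
    set x1 := xh + t1 • d1 with hx1def
    have hx1y : x1 = b⁻¹ • y := by
      rw [hx1def, ht1def, ← hy, smul_add, smul_smul, smul_smul, inv_mul_cancel₀ hb0, one_smul]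
      module
    have hx1m1 : x1 ∈ m1 := by rw [hx1y]; exact m1.smul_mem _ hym.1
    have hφx1 : φ x1 = 1 := by
      have hs : φ (t1 • d1) = t1 * φ d1 := by rw [map_smul, smul_eq_mul]
      have ha : φ x1 = φ xh + φ (t1 • d1) := by rw [hx1def, map_add]
      rw [ha, hs, hφxh, (hφ d1).mp hd1ℓ]; ring
    have hx10 : x1 ≠ 0 := fun h => by rw [h, map_zero] at hφx1; norm_num at hφx1
    have hx1ℓ : x1 ∉ ℓ := fun h => by rw [(hφ _).mp h] at hφx1; norm_num at hφx1
    have hx1mem : x1 ∈ projLine d1 xh := by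
      rw [projLine]
      exact Submodule.mem_span_pair.mpr ⟨t1, 1, by rw [hx1def]; module⟩
    have hL1 : shiftPt (edgeLn C (i - 1)) ℓ m1 X = Submodule.span ℝ {x1} := by
      rw [shiftPt, hE1, hE1ℓinf, hXspan', ← pair_span]
      exact inf_planes_eq_span hm1r (rank_projLine hind1) hS1ne hx10 hx1m1 hx1mem
    -- step 2 (left)
    have hind2 : LinearIndependent ℝ ![d3, x1] := indep_pair₂ hd3ℓ hx1ℓ hd30
    have hS2ne : m2 ≠ projLine d3 x1 := fun h => hd3m2 (h ▸ mem_projLine_left _ _)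
    have hS2r : Module.finrank ℝ (m2 ⊓ projLine d3 x1 : Submodule ℝ V3) = 1 :=
      inf_planes_rank_one hm2r (rank_projLine hind2) hS2ne
    obtain ⟨y2, hy2m, hy20, _⟩ := rank_one_gen hS2r
    have hy2m2 := hy2m.2
    rw [projLine] at hy2m2
    obtain ⟨a2, b2, hy2⟩ := Submodule.mem_span_pair.mp hy2m2
    have hb20 : b2 ≠ 0 := by
      intro h
      rw [h, zero_smul, add_zero] at hy2
      have ha0 : a2 ≠ 0 := by rintro rfl; rw [zero_smul] at hy2; exact hy20 hy2.symm
      have : d3 ∈ m2 := by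
        have := m2.smul_mem a2⁻¹ hy2m.1
        rw [← hy2, smul_smul, inv_mul_cancel₀ ha0, one_smul] at this
        exact this
      exact hd3m2 this
    set t2 := b2⁻¹ * a2 with ht2def
    set x2 := x1 + t2 • d3 with hx2def
    have hx2y : x2 = b2⁻¹ • y2 := by
      rw [hx2def, ht2def, ← hy2, smul_add, smul_smul, smul_smul, inv_mul_cancel₀ hb20, one_smul]
      module
    have hx2m2 : x2 ∈ m2 := by rw [hx2y]; exact m2.smul_mem _ hy2m.1
    have hφx2 : φ x2 = 1 := by
      have hs : φ (t2 • d3) = t2 * φ d3 := by rw [map_smul, smul_eq_mul]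
      have ha : φ x2 = φ x1 + φ (t2 • d3) := by rw [hx2def, map_add]
      rw [ha, hs, hφx1, (hφ d3).mp hd3ℓ]; ring
    have hx20 : x2 ≠ 0 := fun h => by rw [h, map_zero] at hφx2; norm_num at hφx2
    have hx2ℓ : x2 ∉ ℓ := fun h => by rw [(hφ _).mp h] at hφx2; norm_num at hφx2
    have hx2mem : x2 ∈ projLine d3 x1 := by
      rw [projLine]
      exact Submodule.mem_span_pair.mpr ⟨t2, 1, by rw [hx2def]; module⟩
    have hL2 : shiftPt (edgeLn C i) ℓ m2 (Submodule.span ℝ {x1}) = Submodule.span ℝ {x2} := by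
      rw [shiftPt, hE2, hE2ℓinf, ← pair_span]
      exact inf_planes_eq_span hm2r (rank_projLine hind2) hS2ne hx20 hx2m2 hx2mem
    -- the homothety coordinates
    have hx1m1' := hx1m1
    rw [hm1span, projLine] at hx1m1'
    obtain ⟨α, μ, hx1c⟩ := Submodule.mem_span_pair.mp hx1m1'
    have hcp1 : (α - t2 * (φ p1)⁻¹) • p1 = x2 - μ • B' - (t2 * (φ p2)⁻¹) • p2 := by
      rw [hx2def, hd3def, hq2def, hq1def, ← hx1c]; module
    have hα : α = t2 * (φ p1)⁻¹ := by
      by_contra hne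
      have hc0 : α - t2 * (φ p1)⁻¹ ≠ 0 := sub_ne_zero.mpr hne
      have hcm2 : (α - t2 * (φ p1)⁻¹) • p1 ∈ m2 := by
        rw [hcp1]
        exact sub_mem (sub_mem hx2m2 (m2.smul_mem _ hB'm2)) (m2.smul_mem _ hp2m2)
      have := m2.smul_mem (α - t2 * (φ p1)⁻¹)⁻¹ hcm2
      rw [smul_smul, inv_mul_cancel₀ hc0, one_smul] at this
      exact h4c this
    -- the new point z on the new framing line
    set z := xh + (t1 - t2 * a') • d1 with hzdef
    have hzx1 : z = x1 + t2 • (q' - q1) := by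
      rw [hzdef, hx1def, hq'q1]; module
    have hzeq : z = (t2 * (φ p')⁻¹) • p' + μ • B' := by
      rw [hzx1, ← hx1c, hα, hq'def, hq1def]; module
    have hzLP : z ∈ LP := by
      rw [hzeq]; exact add_mem (LP.smul_mem _ hp'LP) (LP.smul_mem _ hB'LP)
    have hz0 : z ≠ 0 := by
      intro h
      rw [hzeq] at h
      by_cases ht2 : t2 = 0
      · rw [ht2, zero_mul, zero_smul, zero_add] at h
        rcases smul_eq_zero.mp h with hμ | hB
        · have hx1z : x1 = 0 := by rw [← hx1c, hα, ht2, hμ]; simp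
          exact hx10 hx1z
        · exact hB'0 hB
      · have hμ0 : μ ≠ 0 := by
          rintro rfl
          rw [zero_smul, add_zero] at h
          rcases smul_eq_zero.mp h with hc | hc
          · rcases mul_eq_zero.mp hc with hc' | hc'
            · exact ht2 hc'
            · exact inv_ne_zero hφp' hc'
          · exact hp'0 hc
        have hB'sp : B' ∈ Submodule.span ℝ {p'} := by
          refine Submodule.mem_span_singleton.mpr ⟨-(μ⁻¹ * (t2 * (φ p')⁻¹)), ?_⟩
          have h2 := congrArg (fun v => μ⁻¹ • v) h
          simp only [smul_add, smul_smul, inv_mul_cancel₀ hμ0, one_smul, smul_zero] at h2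
          have := eq_neg_of_add_eq_zero_right h2
          rw [this]; module
        have hB'E1 : B' ∈ E1 := (Submodule.span_singleton_le_iff_mem p' E1).mpr hp'E1 hB'sp
        have : B' ∈ Submodule.span ℝ {p1} := hE1m1 ▸ Submodule.mem_inf.mpr ⟨hB'E1, hB'm1⟩
        exact h4c (span_mem_upgrade this hB'0 hB'm2)
    have hzmem : z ∈ projLine d1 xh := by
      rw [projLine]
      exact Submodule.mem_span_pair.mpr ⟨t1 - t2 * a', 1, by rw [hzdef]; module⟩
    have hR1 : shiftPt (projLine p0 p') ℓ LP X = Submodule.span ℝ {z} := by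
      rw [shiftPt, hprojp0p', hE1ℓinf, hXspan', ← pair_span]
      exact inf_planes_eq_span hLPr (rank_projLine hind1)
        (fun h => hd1LP (h ▸ mem_projLine_left _ _)) hz0 hzLP hzmem
    -- step 3 (left)
    have hind3 : LinearIndependent ℝ ![d2, x2] := indep_pair₂ hd2ℓ hx2ℓ hd20
    have hS3ne : m3 ≠ projLine d2 x2 := fun h => hd2m3 (h ▸ mem_projLine_left _ _)
    have hS3r : Module.finrank ℝ (m3 ⊓ projLine d2 x2 : Submodule ℝ V3) = 1 :=
      inf_planes_rank_one hm3r (rank_projLine hind3) hS3ne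
    obtain ⟨y3, hy3m, hy30, _⟩ := rank_one_gen hS3r
    have hy3m2 := hy3m.2
    rw [projLine] at hy3m2
    obtain ⟨a3, b3, hy3⟩ := Submodule.mem_span_pair.mp hy3m2
    have hb30 : b3 ≠ 0 := by
      intro h
      rw [h, zero_smul, add_zero] at hy3
      have ha0 : a3 ≠ 0 := by rintro rfl; rw [zero_smul] at hy3; exact hy30 hy3.symm
      have : d2 ∈ m3 := by
        have := m3.smul_mem a3⁻¹ hy3m.1
        rw [← hy3, smul_smul, inv_mul_cancel₀ ha0, one_smul] at this
        exact this
      exact hd2m3 this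
    set t3 := b3⁻¹ * a3 with ht3def
    set x3 := x2 + t3 • d2 with hx3def
    have hx3y : x3 = b3⁻¹ • y3 := by
      rw [hx3def, ht3def, ← hy3, smul_add, smul_smul, smul_smul, inv_mul_cancel₀ hb30, one_smul]
      module
    have hx3m3 : x3 ∈ m3 := by rw [hx3y]; exact m3.smul_mem _ hy3m.1
    have hφx3 : φ x3 = 1 := by
      have hs : φ (t3 • d2) = t3 * φ d2 := by rw [map_smul, smul_eq_mul]
      have ha : φ x3 = φ x2 + φ (t3 • d2) := by rw [hx3def, map_add]
      rw [ha, hs, hφx2, (hφ d2).mp hd2ℓ]; ring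
    have hx30 : x3 ≠ 0 := fun h => by rw [h, map_zero] at hφx3; norm_num at hφx3
    have hx3mem : x3 ∈ projLine d2 x2 := by
      rw [projLine]
      exact Submodule.mem_span_pair.mpr ⟨t3, 1, by rw [hx3def]; module⟩
    have hL3 : shiftPt (edgeLn C (i + 1)) ℓ m3 (Submodule.span ℝ {x2}) =
        Submodule.span ℝ {x3} := by
      rw [shiftPt, hE3, hE3ℓinf, ← pair_span]
      exact inf_planes_eq_span hm3r (rank_projLine hind3) hS3ne hx30 hx3m3 hx3mem
    -- step 2 (right)
    have hx3z : x3 = z + (t3 - t2 * v') • d2 := by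
      rw [hx3def, hx2def, hzx1, hd3def, hq'q2]; module
    have hindz : LinearIndependent ℝ ![d2, z] := indep_pair hd2LP hzLP hd20 hz0
    have hx3memz : x3 ∈ projLine d2 z := by
      rw [projLine]
      exact Submodule.mem_span_pair.mpr ⟨t3 - t2 * v', 1, by rw [hx3z]; module⟩
    have hR2 : shiftPt (projLine p' p3) ℓ m3 (Submodule.span ℝ {z}) =
        Submodule.span ℝ {x3} := by
      rw [shiftPt, hprojp'p3, hE3ℓinf, ← pair_span]
      exact inf_planes_eq_span hm3r (rank_projLine hindz)
        (fun h => hd2m3 (h ▸ mem_projLine_left _ _)) hx30 hx3m3 hx3memz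
    rw [hL1, hL2, hL3, hR1, hR2]

end PortHelpers

open Module Submodule

open Fin.CommRing in
/-- Projection operations preserve monodromy: for a framed cycle `C` in general position on
`k+1 ≥ 4` vertices and its projection `C' = ωᵢ(C)` (written starting from the new vertex
`pᵢ'`), and for every framing line `ℓⱼ` with `j ∉ {i, i+1}`, the monodromies of `C` and `C'`
at `ℓⱼ` coincide.  In particular the composition of the three shifts
`ℓ_{i−1} → ℓᵢ → ℓ_{i+1} → ℓ_{i+2}` equals the composition of the two shifts
`ℓ_{i−1} → ℓᵢ' → ℓ_{i+2}` through the new framing line `ℓᵢ'`. -/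
theorem stmt11 (k : ℕ) (hk : 3 ≤ k) [NeZero k] (C : FramedCycle (k + 1)) (hGP : GenPos C)
    (i : Fin (k + 1)) (p' B' : V3) (hp'0 : p' ≠ 0) (hB'0 : B' ≠ 0)
    (hp' : Submodule.span ℝ {p'} =
      projLine (C.P (i - 1)) (C.P i) ⊓ projLine (C.P (i + 1)) (C.P (i + 2)))
    (hB' : Submodule.span ℝ {B'} = C.L i ⊓ C.L (i + 1))
    (C' : FramedCycle k)
    (hC'P : ∀ j : Fin k, C'.P j = if j = 0 then p' else C.P (i + 1 + ((j : ℕ) : Fin (k + 1))))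
    (hC'L : ∀ j : Fin k, C'.L j =
      if j = 0 then projLine p' B' else C.L (i + 1 + ((j : ℕ) : Fin (k + 1))))
    (ℓ : Submodule ℝ V3) (hℓ : Module.finrank ℝ ℓ = 2)
    (hℓv : ∀ m, C.P m ∉ ℓ) (hℓp' : p' ∉ ℓ) :
    (∀ j' : Fin k, j' ≠ 0 →
      ∀ X : Submodule ℝ V3, X ≤ C.L (i + 1 + ((j' : ℕ) : Fin (k + 1))) →
        Module.finrank ℝ X = 1 →
        shiftChain C ℓ (i + 1 + ((j' : ℕ) : Fin (k + 1))) (k + 1) X =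
          shiftChain C' ℓ j' k X) ∧
    (∀ X : Submodule ℝ V3, X ≤ C.L (i - 1) → Module.finrank ℝ X = 1 →
      shiftPt (edgeLn C (i + 1)) ℓ (C.L (i + 2))
          (shiftPt (edgeLn C i) ℓ (C.L (i + 1)) (shiftPt (edgeLn C (i - 1)) ℓ (C.L i) X)) =
        shiftPt (projLine p' (C.P (i + 2))) ℓ (C.L (i + 2))
          (shiftPt (projLine (C.P (i - 1)) p') ℓ (projLine p' B') X)) := by
  have hℓ'2 : Module.finrank ℝ (projLine p' B') = 2 := by
    have h := C'.hL 0
    rwa [hC'L 0, if_pos rfl] at h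
  have hC'P0 : C'.P 0 = p' := by rw [hC'P, if_pos rfl]
  have hC'L0 : C'.L 0 = projLine p' B' := by rw [hC'L, if_pos rfl]
  have h1k : (1 : ℕ) < k := by omega
  have hone : (1 : Fin k) = ((1 : ℕ) : Fin k) := by push_cast; rfl
  have hone0 : (1 : Fin k) ≠ 0 := by rw [hone]; exact fin_cast_ne_zero (by omega) h1k
  have hcast1 : (((1 : Fin k) : ℕ) : Fin (k + 1)) = 1 := by
    rw [hone, fin_cast_val 1 h1k]; push_cast; rfl
  have hC'P1 : C'.P 1 = C.P (i + 2) := by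
    rw [hC'P, if_neg hone0, hcast1, add_assoc]
    norm_num
  have hC'L1 : C'.L 1 = C.L (i + 2) := by
    rw [hC'L, if_neg hone0, hcast1, add_assoc]
    norm_num
  have hm1ne : (-1 : Fin k) ≠ 0 := by
    rw [← fin_cast_pred]; exact fin_cast_ne_zero (by omega) (by omega)
  have hk12 : ((k - 1 : ℕ) : Fin (k + 1)) = -2 := by
    have h3 : (((k - 1) + 2 : ℕ) : Fin (k + 1)) = 0 := by
      rw [show (k - 1) + 2 = k + 1 from by omega]; exact Fin.natCast_self _
    push_cast at h3; linear_combination h3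
  have hC'Pm1 : C'.P (-1) = C.P (i - 1) := by
    rw [show (-1 : Fin k) = ((k - 1 : ℕ) : Fin k) from fin_cast_pred.symm, hC'P,
      if_neg (fin_cast_ne_zero (by omega) (by omega)), fin_cast_val (k - 1) (by omega), hk12]
    ring_nf
  have hedgem1 : edgeLn C' (-1) = projLine (C.P (i - 1)) p' := by
    rw [edgeLn, show (-1 : Fin k) + 1 = 0 by ring, hC'Pm1, hC'P0]
  have hedge0 : edgeLn C' 0 = projLine p' (C.P (i + 2)) := by
    rw [edgeLn, zero_add, hC'P0, hC'P1]
  constructor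
  · -- chains coincide
    intro j' hj' X hX hX1
    have hj1 : 1 ≤ (j' : ℕ) := by
      rcases Nat.eq_zero_or_pos (j' : ℕ) with h | h
      · exact absurd (Fin.ext (by simp [h])) hj'
      · omega
    have hjk : (j' : ℕ) < k := j'.isLt
    set j : ℕ := (j' : ℕ) with hjdef
    set a : ℕ := k - 1 - j with hadef
    set s : Fin (k + 1) := i + 1 + ((j : ℕ) : Fin (k + 1)) with hsdef
    -- index identities
    have hsa : s + ((a : ℕ) : Fin (k + 1)) = i - 1 := by
      rw [hsdef, add_assoc, ← Nat.cast_add, show j + a = k - 1 from by omega, hk12]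
      ring
    have hsb : j' + ((a : ℕ) : Fin k) = -1 := by
      conv_lhs => rw [← Fin.cast_val_eq_self j']
      rw [← Nat.cast_add, show (j' : ℕ) + a = k - 1 from by omega, fin_cast_pred]
    -- generic step matching
    have hmatch : ∀ m : ℕ, 1 ≤ m → m ≤ k - 2 →
        edgeLn C' ((m : ℕ) : Fin k) = edgeLn C (i + 1 + ((m : ℕ) : Fin (k + 1))) ∧
        C'.L (((m : ℕ) : Fin k) + 1) = C.L (i + 1 + ((m : ℕ) : Fin (k + 1)) + 1) := by
      intro m hm1 hm2
      have hmk : m < k := by omega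
      have hm1k : m + 1 < k := by omega
      have hne0 : ((m : ℕ) : Fin k) ≠ 0 := fin_cast_ne_zero (by omega) hmk
      have hsucc : ((m : ℕ) : Fin k) + 1 = (((m + 1) : ℕ) : Fin k) := by push_cast; ring
      have hne0' : (((m + 1) : ℕ) : Fin k) ≠ 0 := fin_cast_ne_zero (by omega) hm1k
      have hstep : ((m + 1 : ℕ) : Fin (k + 1)) = ((m : ℕ) : Fin (k + 1)) + 1 := by
        push_cast; ring
      constructor
      · rw [edgeLn, hsucc, hC'P, hC'P, if_neg hne0, if_neg hne0', fin_cast_val m hmk,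
          fin_cast_val (m + 1) hm1k, edgeLn, hstep, ← add_assoc]
      · rw [hsucc, hC'L, if_neg hne0', fin_cast_val (m + 1) hm1k, hstep, ← add_assoc]
    -- segment 1
    have seg1 : shiftChain C ℓ s a X = shiftChain C' ℓ j' a X := by
      refine shiftChain_congr C C' ℓ s j' a ?_ ?_ X
      · intro t ht
        have h1 : s + ((t : ℕ) : Fin (k + 1)) = i + 1 + ((j + t : ℕ) : Fin (k + 1)) := by
          rw [hsdef, add_assoc, ← Nat.cast_add]
        have h2 : j' + ((t : ℕ) : Fin k) = ((j + t : ℕ) : Fin k) := by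
          conv_lhs => rw [← Fin.cast_val_eq_self j']
          rw [← Nat.cast_add]
        rw [h1, h2, (hmatch (j + t) (by omega) (by omega)).1]
      · intro t ht
        have h1 : s + ((t : ℕ) : Fin (k + 1)) = i + 1 + ((j + t : ℕ) : Fin (k + 1)) := by
          rw [hsdef, add_assoc, ← Nat.cast_add]
        have h2 : j' + ((t : ℕ) : Fin k) = ((j + t : ℕ) : Fin k) := by
          conv_lhs => rw [← Fin.cast_val_eq_self j']
          rw [← Nat.cast_add]
        rw [h1, h2, (hmatch (j + t) (by omega) (by omega)).2]
    -- middle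
    set Y : Submodule ℝ V3 := shiftChain C ℓ s a X with hYdef
    have hYinv := shiftChain_inv C hGP ℓ hℓ hℓv s a hX hX1
    rw [hsa] at hYinv
    have hkey := key_lemma k hk C hGP i p' B' hp'0 hB'0 hp' hB' hℓ'2 ℓ hℓ hℓv hℓp'
      Y hYinv.1 hYinv.2
    have mid : shiftChain C ℓ (i - 1) 3 Y = shiftChain C' ℓ (-1 : Fin k) 2 Y := by
      rw [shiftChain_three, shiftChain_two,
        show (i - 1 : Fin (k + 1)) + 2 = i + 1 by ring,
        show (i - 1 : Fin (k + 1)) + 1 = i by ring,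
        show (i + 1 : Fin (k + 1)) + 1 = i + 2 by ring,
        show (-1 : Fin k) + 1 = 0 by ring, zero_add, hedgem1, hedge0, hC'L0, hC'L1]
      exact hkey
    -- segment 3
    set Z : Submodule ℝ V3 := shiftChain C ℓ (i - 1) 3 Y with hZdef
    have seg3 : shiftChain C ℓ (i + 2) (j - 1) Z = shiftChain C' ℓ (1 : Fin k) (j - 1) Z := by
      refine shiftChain_congr C C' ℓ (i + 2) 1 (j - 1) ?_ ?_ Z
      · intro t ht
        have h2 : (1 : Fin k) + ((t : ℕ) : Fin k) = ((1 + t : ℕ) : Fin k) := by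
          push_cast; ring
        have h1 : (i + 2 : Fin (k + 1)) + ((t : ℕ) : Fin (k + 1)) =
            i + 1 + ((1 + t : ℕ) : Fin (k + 1)) := by push_cast; ring
        rw [h1, h2, (hmatch (1 + t) (by omega) (by omega)).1]
      · intro t ht
        have h2 : (1 : Fin k) + ((t : ℕ) : Fin k) = ((1 + t : ℕ) : Fin k) := by
          push_cast; ring
        have h1 : (i + 2 : Fin (k + 1)) + ((t : ℕ) : Fin (k + 1)) =
            i + 1 + ((1 + t : ℕ) : Fin (k + 1)) := by push_cast; ring
        rw [h1, h2, (hmatch (1 + t) (by omega) (by omega)).2]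
    -- assembling
    have eL1 := shiftChain_add C ℓ s a (3 + (j - 1)) X
    rw [show a + (3 + (j - 1)) = k + 1 from by omega] at eL1
    have eL2 := shiftChain_add C ℓ (s + ((a : ℕ) : Fin (k + 1))) 3 (j - 1) Y
    rw [hsa] at eL1 eL2
    have hi23 : (i - 1 : Fin (k + 1)) + ((3 : ℕ) : Fin (k + 1)) = i + 2 := by
      push_cast; ring
    rw [hi23] at eL2
    have eR1 := shiftChain_add C' ℓ j' a (2 + (j - 1)) X
    rw [show a + (2 + (j - 1)) = k from by omega] at eR1
    have eR2 := shiftChain_add C' ℓ (j' + ((a : ℕ) : Fin k)) 2 (j - 1) (shiftChain C' ℓ j' a X)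
    rw [hsb] at eR1 eR2
    have hm12 : (-1 : Fin k) + ((2 : ℕ) : Fin k) = 1 := by push_cast; ring
    rw [hm12] at eR2
    rw [← seg1] at eR1 eR2
    calc shiftChain C ℓ s (k + 1) X
        = shiftChain C ℓ (i + 2) (j - 1) Z := eL1.trans eL2
      _ = shiftChain C' ℓ (1 : Fin k) (j - 1) (shiftChain C' ℓ (-1 : Fin k) 2 Y) := by
          rw [seg3, mid]
      _ = shiftChain C' ℓ j' k X := (eR1.trans eR2).symm
  · -- the three-shift/two-shift identity
    intro X hX hX1
    exact key_lemma k hk C hGP i p' B' hp'0 hB'0 hp' hB' hℓ'2 ℓ hℓ hℓv hℓp' X hX hX1
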